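/- arXiv:cs/0612108 — 4 statements merged into one kernel-verified Lean document; each statement's English description precedes it below -/
import Mathlib

section
/- Every acyclic b-matching preference instance has exactly one stable configuration. -/
/-!
A formalization of b-matching preference instances (peers, acceptance graph,
quotas, preference lists given by ranks), configurations, blocking pairs,
stability, active initiatives, loving pairs, and acyclicity.
-/

open Finset

/-- A b-matching preference instance on a finite set `P` of peers:
an acceptance graph `G`, quotas `b`, and for each peer `p` a rank function
(`rank p q` is the position of `q` in `p`'s preference list, smaller is better),
injective on the neighbors of `p` (strict preferences). -/
structure PrefInstance (P : Type*) [Fintype P] [DecidableEq P] where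
  G : SimpleGraph P
  b : P → ℕ
  rank : P → P → ℕ
  rank_injOn : ∀ p : P, Set.InjOn (rank p) {q | G.Adj p q}

namespace PrefInstance

variable {P : Type*} [Fintype P] [DecidableEq P] (I : PrefInstance P)

/-- `p` prefers `q` to `r` (both neighbors of `p`, `q` ranked better). -/
def Prefers (p q r : P) : Prop :=
  I.G.Adj p q ∧ I.G.Adj p r ∧ I.rank p q < I.rank p r

/-- The instance is acyclic: there is no preference cycle, i.e. no `k ≥ 3`
distinct peers `p_1, …, p_k` (indices modulo `k`) such that each `p_i`
prefers `p_{i+1}` to `p_{i-1}`. -/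
def Acyclic : Prop :=
  ¬ ∃ (k : ℕ) (f : ZMod k → P), 3 ≤ k ∧ Function.Injective f ∧
      ∀ i : ZMod k, I.Prefers (f i) (f (i + 1)) (f (i - 1))

/-- The mates of `p` in a set `C` of edges. -/
def mates (C : Finset (Sym2 P)) (p : P) : Finset P :=
  Finset.univ.filter fun q => s(p, q) ∈ C

/-- `C` is a configuration: a set of edges of the acceptance graph in which every
peer `p` has at most `b p` mates. -/
def IsConfig (C : Finset (Sym2 P)) : Prop :=
  (∀ e ∈ C, e ∈ I.G.edgeSet) ∧ ∀ p : P, (mates C p).card ≤ I.b p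

/-- `p` is under-mated in `C`: it has fewer than `b p` mates. -/
def UnderMated (C : Finset (Sym2 P)) (p : P) : Prop :=
  (mates C p).card < I.b p

/-- `p` is willing to pair with `q`: it is under-mated, or it prefers `q`
to its worst mate in `C`. -/
def Willing (C : Finset (Sym2 P)) (p q : P) : Prop :=
  I.UnderMated C p ∨ ∃ w ∈ mates C p, I.rank p q < I.rank p w

/-- `{p, q}` is a blocking pair for `C`: an edge of the acceptance graph not in
`C` such that each endpoint is under-mated or prefers the other to its worst mate. -/
def BlockingPair (C : Finset (Sym2 P)) (p q : P) : Prop :=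
  I.G.Adj p q ∧ s(p, q) ∉ C ∧ I.Willing C p q ∧ I.Willing C q p

/-- A configuration is stable if it admits no blocking pair. -/
def IsStable (C : Finset (Sym2 P)) : Prop :=
  I.IsConfig C ∧ ∀ p q : P, ¬ I.BlockingPair C p q

/-- The edges to be dropped at `p` when `p` gets a new mate: none if `p` is
under-mated, otherwise the edge joining `p` to its worst mate in `C`. -/
def dropEdges (C : Finset (Sym2 P)) (p : P) : Finset (Sym2 P) :=
  if (mates C p).card < I.b p then ∅
  else ((mates C p).filter fun w => ∀ r ∈ mates C p, I.rank p r ≤ I.rank p w).image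
      fun w => s(p, w)

/-- The configuration produced by resolving the blocking pair `{p, q}` of `C`:
add the edge `{p, q}` and, for each of `p` and `q` already at full quota,
remove the edge joining it to its worst mate. -/
def resolve (C : Finset (Sym2 P)) (p q : P) : Finset (Sym2 P) :=
  insert s(p, q) (C \ (I.dropEdges C p ∪ I.dropEdges C q))

/-- `C'` is obtained from `C` by an active initiative. -/
def ActiveStep (C C' : Finset (Sym2 P)) : Prop :=
  ∃ p q : P, I.BlockingPair C p q ∧ C' = I.resolve C p q

/-- `{p, q}` is a loving pair: an edge of the acceptance graph whose endpoints
rank each other first. -/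
def LovingPair (p q : P) : Prop :=
  I.G.Adj p q ∧ (∀ r : P, I.G.Adj p r → I.rank p q ≤ I.rank p r) ∧
    ∀ r : P, I.G.Adj q r → I.rank q p ≤ I.rank q r

open scoped Classical in
/-- The best-mate initiative of peer `p` at configuration `C`: resolve the
blocking pair `{p, q}` where `q` is the peer `p` prefers most among all peers
forming a blocking pair with `p`; if `p` belongs to no blocking pair, `C` is
left unchanged. -/
noncomputable def bestMateInit (C : Finset (Sym2 P)) (p : P) : Finset (Sym2 P) :=
  if h : ∃ q : P, I.BlockingPair C p q ∧
      ∀ r : P, I.BlockingPair C p r → I.rank p q ≤ I.rank p r then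
    I.resolve C p h.choose
  else C

end PrefInstance

namespace PrefInstance

variable {P : Type*} [Fintype P] [DecidableEq P]

lemma mem_mates {C : Finset (Sym2 P)} {p q : P} : q ∈ mates C p ↔ s(p, q) ∈ C := by
  simp [mates]

lemma exists_best (I : PrefInstance P) {p q : P} (h : I.G.Adj p q) :
    ∃ r, I.G.Adj p r ∧ ∀ s, I.G.Adj p s → I.rank p r ≤ I.rank p s := by
  classical
  obtain ⟨r, hr, hmin⟩ := Finset.exists_min_image (Finset.univ.filter fun x => I.G.Adj p x)
    (I.rank p) ⟨q, by simpa using h⟩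
  exact ⟨r, by simpa using hr, fun s hs => hmin s (by simpa using hs)⟩

open scoped Classical in
/-- The favorite neighbor of `p` (or `p` itself if `p` has no neighbor). -/
noncomputable def fav (I : PrefInstance P) (p : P) : P :=
  if h : ∃ r, I.G.Adj p r ∧ ∀ s, I.G.Adj p s → I.rank p r ≤ I.rank p s then h.choose else p

lemma fav_spec (I : PrefInstance P) {p q : P} (h : I.G.Adj p q) :
    I.G.Adj p (I.fav p) ∧ ∀ s, I.G.Adj p s → I.rank p (I.fav p) ≤ I.rank p s := by
  have hex := I.exists_best h
  rw [fav, dif_pos hex]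
  exact hex.choose_spec

lemma exists_lovingPair (I : PrefInstance P) (hI : I.Acyclic) {a b : P} (hab : I.G.Adj a b) :
    ∃ p q, I.LovingPair p q := by
  classical
  by_contra hno
  set f : ℕ → P := fun n => I.fav^[n] a with hf
  have hstep : ∀ n, f (n + 1) = I.fav (f n) := by
    intro n; simp [hf, Function.iterate_succ_apply']
  have hadj : ∀ n, I.G.Adj (f n) (f (n + 1)) := by
    intro n
    induction n with
    | zero => rw [hstep 0]; exact (I.fav_spec hab).1
    | succ k ih => rw [hstep (k + 1)]; exact (I.fav_spec ih.symm).1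
  have hne2 : ∀ n, f (n + 2) ≠ f n := by
    intro n heq
    apply hno
    refine ⟨f n, f (n + 1), hadj n, ?_, ?_⟩
    · intro r hr
      rw [hstep n]; exact (I.fav_spec (hadj n)).2 r hr
    · intro r hr
      have h2 : f n = I.fav (f (n + 1)) := by rw [← heq]; exact hstep (n + 1)
      rw [h2]; exact (I.fav_spec (hadj n).symm).2 r hr
  have hpref : ∀ n, I.Prefers (f (n + 1)) (f (n + 2)) (f n) := by
    intro n
    refine ⟨hadj (n + 1), (hadj n).symm, ?_⟩
    have hle : I.rank (f (n + 1)) (f (n + 2)) ≤ I.rank (f (n + 1)) (f n) := by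
      rw [hstep (n + 1)]; exact (I.fav_spec (hadj n).symm).2 _ (hadj n).symm
    refine lt_of_le_of_ne hle fun heq => hne2 n ?_
    exact I.rank_injOn (f (n + 1)) (hadj (n + 1)) (hadj n).symm heq
  have hrep : ∃ j, ∃ i, i < j ∧ f i = f j := by
    obtain ⟨x, y, hxy, hfxy⟩ := Finite.exists_ne_map_eq_of_infinite f
    rcases hxy.lt_or_gt with h | h
    · exact ⟨y, x, h, hfxy⟩
    · exact ⟨x, y, h, hfxy.symm⟩
  obtain ⟨i, hij, hfij⟩ := Nat.find_spec hrep
  set j := Nat.find hrep with hjdef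
  have hmin : ∀ x y, x < y → y < j → f x ≠ f y := by
    intro x y hxy hyj heq
    exact Nat.find_min hrep hyj ⟨x, hxy, heq⟩
  set m := j - i with hm
  have hm1 : 1 ≤ m := by omega
  have hperiod : ∀ s, f (i + s + m) = f (i + s) := by
    intro s
    induction s with
    | zero => simpa using (show f (i + m) = f i by rw [show i + m = j by omega]; exact hfij.symm)
    | succ k ih =>
        have e1 : i + (k + 1) + m = (i + k + m) + 1 := by omega
        have e2 : i + (k + 1) = (i + k) + 1 := by omega
        rw [e1, e2, hstep, hstep, ih]
  have hperiodk : ∀ k s, f (i + s + k * m) = f (i + s) := by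
    intro k
    induction k with
    | zero => simp
    | succ l ih =>
        intro s
        have e1 : i + s + (l + 1) * m = i + (s + l * m) + m := by ring
        have e2 : i + (s + l * m) = i + s + l * m := by ring
        rw [e1, hperiod, e2, ih]
  have hcongr : ∀ s t, i ≤ s → i ≤ t → s ≡ t [MOD m] → f s = f t := by
    have key : ∀ s t, i ≤ s → s ≤ t → s ≡ t [MOD m] → f s = f t := by
      intro s t his hst hmod
      obtain ⟨k, hk⟩ := (Nat.modEq_iff_dvd' hst).mp hmod
      rw [Nat.mul_comm] at hk
      rw [show t = i + (s - i) + k * m by omega, hperiodk, show i + (s - i) = s by omega]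
    intro s t his hit hmod
    rcases le_total s t with h | h
    · exact key s t his h hmod
    · exact (key t s hit h hmod.symm).symm
  have hm3 : 3 ≤ m := by
    rcases (show m = 1 ∨ m = 2 ∨ 3 ≤ m by omega) with h1 | h2 | h3
    · exfalso
      have h4 : f (i + 1) = f i := by rw [show i + 1 = j by omega]; exact hfij.symm
      exact (hadj i).ne' (by rw [h4])
    · exfalso
      have h4 : f (i + 2) = f i := by rw [show i + 2 = j by omega]; exact hfij.symm
      exact hne2 i h4
    · exact h3
  haveI : NeZero m := ⟨by omega⟩
  haveI : Fact (1 < m) := ⟨by omega⟩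
  set g : ZMod m → P := fun t => f (i + t.val) with hg
  have hval_lt : ∀ t : ZMod m, t.val < m := fun t => ZMod.val_lt t
  have hginj : Function.Injective g := by
    intro t t' heq
    by_contra hne
    have hvne : t.val ≠ t'.val := fun h => hne (ZMod.val_injective _ h)
    rcases hvne.lt_or_gt with h | h
    · exact hmin (i + t.val) (i + t'.val) (by omega) (by have := hval_lt t'; omega) heq
    · exact hmin (i + t'.val) (i + t.val) (by omega) (by have := hval_lt t; omega) heq.symm
  apply hI
  refine ⟨m, g, hm3, hginj, ?_⟩
  intro t
  set N := i + m + t.val with hN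
  have h1 : f N = g t := by
    refine hcongr _ _ (by omega) (by omega) ?_
    exact ((Nat.modEq_iff_dvd' (by omega)).2 ⟨1, by omega⟩).symm
  have hvadd : (t + 1).val = (t.val + 1) % m := by
    rw [ZMod.val_add, ZMod.val_one]
  have h2 : f (N + 1) = g (t + 1) := by
    refine hcongr _ _ (by omega) (by omega) ?_
    show (N + 1) ≡ (i + (t + 1).val) [MOD m]
    rw [hvadd]
    have e1 : (i + m + t.val + 1) ≡ (i + (t.val + 1)) [MOD m] :=
      ((Nat.modEq_iff_dvd' (by omega)).2 ⟨1, by omega⟩).symm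
    have e2 : i + (t.val + 1) % m ≡ i + (t.val + 1) [MOD m] :=
      Nat.ModEq.add_left i (Nat.mod_modEq _ m)
    exact e1.trans e2.symm
  have hvsub : (t - 1).val = (t.val + (m - 1)) % m := by
    have e0 : (t - 1 : ZMod m) = t + ((m - 1 : ℕ) : ZMod m) := by
      have hc : ((m - 1 : ℕ) : ZMod m) = -1 := by
        have hms : ((m : ℕ) : ZMod m) = 0 := ZMod.natCast_self m
        rw [Nat.cast_sub (by omega), hms, Nat.cast_one]; ring
      rw [hc]; ring
    rw [e0, ZMod.val_add, ZMod.val_natCast, Nat.mod_eq_of_lt (by omega : m - 1 < m)]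
  have h3 : f (N - 1) = g (t - 1) := by
    refine hcongr _ _ (by omega) (by omega) ?_
    show (N - 1) ≡ (i + (t - 1).val) [MOD m]
    rw [hvsub, show N - 1 = i + (t.val + (m - 1)) by omega]
    exact (Nat.ModEq.add_left i (Nat.mod_modEq _ m)).symm
  have hp := hpref (N - 1)
  rw [show N - 1 + 1 = N by omega, show N - 1 + 2 = N + 1 by omega] at hp
  rw [h1, h2, h3] at hp
  exact hp

end PrefInstance


namespace PrefInstance

variable {P : Type*} [Fintype P] [DecidableEq P]

lemma adj_of_mate (I : PrefInstance P) {C : Finset (Sym2 P)} (hC : I.IsConfig C) {p w : P}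
    (hw : w ∈ mates C p) : I.G.Adj p w :=
  I.G.mem_edgeSet.mp (hC.1 _ (mem_mates.mp hw))

/-- A first-choice peer with spare quota is willing towards its favorite. -/
lemma willing_of_best (I : PrefInstance P) {C : Finset (Sym2 P)} {p q : P}
    (hadj : I.G.Adj p q) (hmin : ∀ r, I.G.Adj p r → I.rank p q ≤ I.rank p r)
    (hb : 1 ≤ I.b p) (hC : I.IsConfig C) (hmem : s(p, q) ∉ C) : I.Willing C p q := by
  by_cases hu : I.UnderMated C p
  · exact Or.inl hu
  · right
    have hcard : I.b p ≤ (mates C p).card := not_lt.mp hu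
    obtain ⟨w, hw⟩ : (mates C p).Nonempty := Finset.card_pos.mp (by omega)
    refine ⟨w, hw, ?_⟩
    have hadjw : I.G.Adj p w := I.adj_of_mate hC hw
    refine lt_of_le_of_ne (hmin w hadjw) fun heq => ?_
    have : q = w := I.rank_injOn p hadj hadjw heq
    exact hmem (this ▸ mem_mates.mp hw)

/-- Every loving pair (between peers with positive quota) belongs to every
stable configuration. -/
lemma lovingPair_mem_stable (I : PrefInstance P) {p q : P} (h : I.LovingPair p q)
    (hbp : 1 ≤ I.b p) (hbq : 1 ≤ I.b q) {C : Finset (Sym2 P)} (hC : I.IsStable C) :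
    s(p, q) ∈ C := by
  by_contra hmem
  refine hC.2 p q ⟨h.1, hmem, ?_, ?_⟩
  · exact I.willing_of_best h.1 h.2.1 hbp hC.1 hmem
  · exact I.willing_of_best h.1.symm h.2.2 hbq hC.1
      (by rwa [Sym2.eq_swap] at hmem)

/-- Remove all edges incident to `p`. -/
def stripPeer (I : PrefInstance P) (p : P) : PrefInstance P where
  G := I.G.deleteEdges {e | p ∈ e}
  b := I.b
  rank := I.rank
  rank_injOn := fun r => (I.rank_injOn r).mono fun x hx => by
    simp only [Set.mem_setOf_eq, SimpleGraph.deleteEdges_adj] at hx ⊢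
    exact hx.1

/-- Remove the edge `{p, q}` and decrement the quotas of `p` and `q`. -/
def dropPair (I : PrefInstance P) (p q : P) : PrefInstance P where
  G := I.G.deleteEdges {s(p, q)}
  b := fun r => if r = p ∨ r = q then I.b r - 1 else I.b r
  rank := I.rank
  rank_injOn := fun r => (I.rank_injOn r).mono fun x hx => by
    simp only [Set.mem_setOf_eq, SimpleGraph.deleteEdges_adj] at hx ⊢
    exact hx.1

lemma acyclic_mono {I J : PrefInstance P} (hG : J.G ≤ I.G) (hr : J.rank = I.rank)
    (hI : I.Acyclic) : J.Acyclic := by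
  rintro ⟨k, f, hk, hinj, hcyc⟩
  exact hI ⟨k, f, hk, hinj, fun i =>
    ⟨hG (hcyc i).1, hG (hcyc i).2.1, by rw [← hr]; exact (hcyc i).2.2⟩⟩

lemma mates_insert_ne {C : Finset (Sym2 P)} {p q r : P} (h1 : r ≠ p) (h2 : r ≠ q) :
    mates (insert s(p, q) C) r = mates C r := by
  ext x
  simp only [mem_mates, Finset.mem_insert, Sym2.eq_iff]
  constructor
  · rintro ((⟨rfl, rfl⟩ | ⟨rfl, rfl⟩) | h)
    · exact absurd rfl h1
    · exact absurd rfl h2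
    · exact h
  · exact fun h => Or.inr h

lemma mates_insert_self {C : Finset (Sym2 P)} {p q : P} :
    mates (insert s(p, q) C) p = insert q (mates C p) := by
  ext x
  simp only [mem_mates, Finset.mem_insert, Sym2.eq_iff]
  constructor
  · rintro ((⟨-, rfl⟩ | ⟨rfl, rfl⟩) | h)
    · exact Or.inl rfl
    · exact Or.inl rfl
    · exact Or.inr h
  · rintro (rfl | h)
    · exact Or.inl (Or.inl ⟨trivial, rfl⟩)
    · exact Or.inr h

lemma mates_insert_self' {C : Finset (Sym2 P)} {p q : P} :
    mates (insert s(p, q) C) q = insert p (mates C q) := by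
  rw [Sym2.eq_swap]; exact mates_insert_self

end PrefInstance


namespace PrefInstance

variable {P : Type*} [Fintype P] [DecidableEq P]

lemma strip_stable_iff (I : PrefInstance P) {p : P} (hb : I.b p = 0) (C : Finset (Sym2 P)) :
    I.IsStable C ↔ (I.stripPeer p).IsStable C := by
  have hKG : (I.stripPeer p).G = I.G.deleteEdges {e | p ∈ e} := rfl
  constructor
  · rintro ⟨⟨hedge, hquota⟩, hstab⟩
    have hmp : mates C p = ∅ := Finset.card_eq_zero.mp
      (by have := hquota p; rw [hb] at this; omega)
    refine ⟨⟨?_, hquota⟩, ?_⟩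
    · intro e he
      show e ∈ (I.stripPeer p).G.edgeSet
      rw [hKG, SimpleGraph.edgeSet_deleteEdges]
      refine ⟨hedge e he, fun hpe => ?_⟩
      obtain ⟨w, rfl⟩ := Sym2.mem_iff_exists.mp hpe
      have hw : w ∈ mates C p := mem_mates.mpr he
      simp [hmp] at hw
    · rintro x y ⟨hadj, hnot, hwx, hwy⟩
      rw [hKG, SimpleGraph.deleteEdges_adj] at hadj
      exact hstab x y ⟨hadj.1, hnot, hwx, hwy⟩
  · rintro ⟨⟨hedge, hquota⟩, hstab⟩
    have hCp : mates C p = ∅ := by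
      rw [Finset.eq_empty_iff_forall_notMem]
      intro w hw
      have hmem := hedge _ (mem_mates.mp hw)
      rw [hKG, SimpleGraph.edgeSet_deleteEdges] at hmem
      exact hmem.2 (Sym2.mem_mk_left p w)
    refine ⟨⟨?_, hquota⟩, ?_⟩
    · intro e he
      have hmem := hedge e he
      rw [hKG, SimpleGraph.edgeSet_deleteEdges] at hmem
      exact hmem.1
    · rintro x y ⟨hadj, hnot, hwx, hwy⟩
      by_cases hx : x = p
      · subst hx
        rcases hwx with hu | ⟨w, hw, -⟩
        · have hu' : (mates C x).card < I.b x := hu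
          rw [hCp, hb] at hu'; simp at hu'
        · rw [hCp] at hw; simp at hw
      by_cases hy : y = p
      · subst hy
        rcases hwy with hu | ⟨w, hw, -⟩
        · have hu' : (mates C y).card < I.b y := hu
          rw [hCp, hb] at hu'; simp at hu'
        · rw [hCp] at hw; simp at hw
      refine hstab x y ⟨?_, hnot, hwx, hwy⟩
      rw [hKG, SimpleGraph.deleteEdges_adj]
      refine ⟨hadj, fun hpe => ?_⟩
      rcases Sym2.mem_iff.mp hpe with rfl | rfl
      · exact hx rfl
      · exact hy rfl

lemma drop_stable_iff (I : PrefInstance P) {p q : P} (hL : I.LovingPair p q)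
    (hbp : 1 ≤ I.b p) (hbq : 1 ≤ I.b q) {C' : Finset (Sym2 P)} (he : s(p, q) ∉ C') :
    I.IsStable (insert s(p, q) C') ↔ (I.dropPair p q).IsStable C' := by
  set J := I.dropPair p q with hJ
  set C := insert s(p, q) C' with hC
  have hJG : J.G = I.G.deleteEdges {s(p, q)} := rfl
  have hpq : p ≠ q := hL.1.ne
  have hJbp : J.b p = I.b p - 1 := by simp [hJ, dropPair]
  have hJbq : J.b q = I.b q - 1 := by simp [hJ, dropPair]
  have hJbr : ∀ r, r ≠ p → r ≠ q → J.b r = I.b r := by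
    intro r h1 h2; simp [hJ, dropPair, h1, h2]
  have hqnot : q ∉ mates C' p := fun h => he (mem_mates.mp h)
  have hpnot : p ∉ mates C' q := fun h => he (by rw [Sym2.eq_swap]; exact mem_mates.mp h)
  have mp : mates C p = insert q (mates C' p) := mates_insert_self
  have mq : mates C q = insert p (mates C' q) := mates_insert_self'
  have mr : ∀ r, r ≠ p → r ≠ q → mates C r = mates C' r := fun r h1 h2 =>
    mates_insert_ne h1 h2
  have cardp : (mates C p).card = (mates C' p).card + 1 := by
    rw [mp, Finset.card_insert_of_notMem hqnot]
  have cardq : (mates C q).card = (mates C' q).card + 1 := by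
    rw [mq, Finset.card_insert_of_notMem hpnot]
  -- willingness transfer at p and q
  have hwill : ∀ r s0, mates C r = insert s0 (mates C' r) → s0 ∉ mates C' r →
      J.b r = I.b r - 1 → 1 ≤ I.b r → (∀ z, I.G.Adj r z → I.rank r s0 ≤ I.rank r z) →
      ∀ x, I.G.Adj r x → (I.Willing C r x ↔ J.Willing C' r x) := by
    intro r s0 hm hs0 hbJ hb1 hmin x hx
    have hcard : (mates C r).card = (mates C' r).card + 1 := by
      rw [hm, Finset.card_insert_of_notMem hs0]
    constructor
    · rintro (hu | ⟨w, hw, hrk⟩)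
      · left
        show (mates C' r).card < J.b r
        have hu' : (mates C r).card < I.b r := hu
        omega
      · rw [hm, Finset.mem_insert] at hw
        rcases hw with rfl | hw
        · exact absurd hrk (not_lt.mpr (hmin x hx))
        · exact Or.inr ⟨w, hw, hrk⟩
    · rintro (hu | ⟨w, hw, hrk⟩)
      · left
        show (mates C r).card < I.b r
        have hu' : (mates C' r).card < J.b r := hu
        omega
      · exact Or.inr ⟨w, by rw [hm]; exact Finset.mem_insert_of_mem hw, hrk⟩
  -- willingness transfer elsewhere
  have hWeq : ∀ r, r ≠ p → r ≠ q → ∀ x, I.Willing C r x ↔ J.Willing C' r x := by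
    intro r h1 h2 x
    have e1 : I.Willing C r x ↔
        ((mates C r).card < I.b r ∨ ∃ w ∈ mates C r, I.rank r x < I.rank r w) := Iff.rfl
    have e2 : J.Willing C' r x ↔
        ((mates C' r).card < J.b r ∨ ∃ w ∈ mates C' r, I.rank r x < I.rank r w) := Iff.rfl
    rw [e1, e2, mr r h1 h2, hJbr r h1 h2]
  have hconfig : I.IsConfig C ↔ J.IsConfig C' := by
    constructor
    · rintro ⟨hedge, hquota⟩
      refine ⟨?_, ?_⟩
      · intro x hx
        show x ∈ J.G.edgeSet
        rw [hJG, SimpleGraph.edgeSet_deleteEdges]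
        refine ⟨hedge x (Finset.mem_insert_of_mem hx), fun hxx => ?_⟩
        exact he (Set.mem_singleton_iff.mp hxx ▸ hx)
      · intro r
        by_cases h1 : r = p
        · subst h1; have := hquota r; rw [hJbp]; omega
        by_cases h2 : r = q
        · subst h2; have := hquota r; rw [hJbq]; omega
        · have := hquota r; rw [hJbr r h1 h2, ← mr r h1 h2]; exact this
    · rintro ⟨hedge, hquota⟩
      refine ⟨?_, ?_⟩
      · intro x hx
        rcases Finset.mem_insert.mp hx with rfl | hx
        · exact I.G.mem_edgeSet.mpr hL.1
        · have hmem := hedge x hx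
          rw [hJG, SimpleGraph.edgeSet_deleteEdges] at hmem
          exact hmem.1
      · intro r
        by_cases h1 : r = p
        · subst h1; have := hquota r; rw [hJbp] at this; omega
        by_cases h2 : r = q
        · subst h2; have := hquota r; rw [hJbq] at this; omega
        · have := hquota r; rw [hJbr r h1 h2] at this; rw [mr r h1 h2]; exact this
  have hblock : ∀ x y, I.BlockingPair C x y ↔ J.BlockingPair C' x y := by
    intro x y
    have hwx_iff : ∀ x y, I.G.Adj x y → s(x, y) ≠ s(p, q) →
        (I.Willing C x y ↔ J.Willing C' x y) := by
      intro x y hadj hne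
      by_cases h1 : x = p
      · subst h1; exact hwill x q mp hqnot hJbp hbp hL.2.1 y hadj
      by_cases h2 : x = q
      · subst h2; exact hwill x p mq hpnot hJbq hbq hL.2.2 y hadj
      · exact hWeq x h1 h2 y
    constructor
    · rintro ⟨hadj, hnot, hwx, hwy⟩
      have hne : s(x, y) ≠ s(p, q) := fun hh => hnot (by rw [hh]; exact Finset.mem_insert_self _ _)
      have hne' : s(y, x) ≠ s(p, q) := by rwa [Sym2.eq_swap]
      refine ⟨?_, fun hh => hnot (Finset.mem_insert_of_mem hh), ?_, ?_⟩
      · rw [hJG, SimpleGraph.deleteEdges_adj]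
        exact ⟨hadj, by simpa using hne⟩
      · exact (hwx_iff x y hadj hne).mp hwx
      · exact (hwx_iff y x hadj.symm hne').mp hwy
    · rintro ⟨hadj, hnot, hwx, hwy⟩
      rw [hJG, SimpleGraph.deleteEdges_adj] at hadj
      obtain ⟨hadjI, hne0⟩ := hadj
      have hne : s(x, y) ≠ s(p, q) := by simpa using hne0
      have hne' : s(y, x) ≠ s(p, q) := by rwa [Sym2.eq_swap]
      refine ⟨hadjI, ?_, ?_, ?_⟩
      · intro hh
        rcases Finset.mem_insert.mp hh with h' | h'
        · exact hne h'
        · exact hnot h'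
      · exact (hwx_iff x y hadjI hne).mpr hwx
      · exact (hwx_iff y x hadjI.symm hne').mpr hwy
  constructor
  · rintro ⟨hc, hs⟩
    exact ⟨hconfig.mp hc, fun x y hb0 => hs x y ((hblock x y).mpr hb0)⟩
  · rintro ⟨hc, hs⟩
    exact ⟨hconfig.mpr hc, fun x y hb0 => hs x y ((hblock x y).mp hb0)⟩

end PrefInstance


variable {P : Type*} [Fintype P] [DecidableEq P]

open PrefInstance

/-- Every acyclic b-matching preference instance has exactly
one stable configuration. -/
theorem acyclic_existsUnique_stable (I : PrefInstance P) (hI : I.Acyclic) :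
    ∃! C : Finset (Sym2 P), I.IsStable C := by
  classical
  suffices h : ∀ n (I : PrefInstance P), I.Acyclic → I.G.edgeSet.ncard = n →
      ∃! C : Finset (Sym2 P), I.IsStable C from h _ I hI rfl
  intro n
  induction n using Nat.strong_induction_on with
  | _ n ih =>
    intro I hI hcard
    by_cases h0 : I.G.edgeSet = ∅
    · -- no edges: the empty configuration is the unique stable one
      refine ⟨∅, ⟨⟨fun e he => absurd he (Finset.notMem_empty e),
        fun p => by simp [mates]⟩, ?_⟩, ?_⟩
      · rintro x y ⟨hadj, -, -, -⟩
        have hmem : s(x, y) ∈ I.G.edgeSet := I.G.mem_edgeSet.mpr hadj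
        rw [h0] at hmem
        exact hmem
      · intro C hC
        refine Finset.eq_empty_of_forall_notMem fun e he => ?_
        have hmem := hC.1.1 e he
        rw [h0] at hmem
        exact hmem
    by_cases hp : ∃ p, I.b p = 0 ∧ ∃ x, I.G.Adj p x
    · -- strip a zero-quota peer with a neighbor
      obtain ⟨p, hbp, x, hx⟩ := hp
      set K := I.stripPeer p with hK
      have hKG : K.G = I.G.deleteEdges {e | p ∈ e} := rfl
      have hss : K.G.edgeSet ⊂ I.G.edgeSet := by
        rw [hKG, SimpleGraph.edgeSet_deleteEdges, Set.ssubset_def]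
        refine ⟨Set.diff_subset, fun hsub => ?_⟩
        have h1 : s(p, x) ∈ I.G.edgeSet := I.G.mem_edgeSet.mpr hx
        exact (hsub h1).2 (Sym2.mem_mk_left p x)
      have hlt : K.G.edgeSet.ncard < n := by
        rw [← hcard]
        exact Set.ncard_lt_ncard hss (Set.toFinite _)
      have hKacyc : K.Acyclic :=
        acyclic_mono (SimpleGraph.deleteEdges_le _) rfl hI
      obtain ⟨C0, hC0, huniq⟩ := ih _ hlt K hKacyc rfl
      exact ⟨C0, (I.strip_stable_iff hbp C0).mpr hC0,
        fun C hC => huniq C ((I.strip_stable_iff hbp C).mp hC)⟩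
    · -- find a loving pair, drop it, use induction
      push_neg at hp
      obtain ⟨e, heE⟩ := Set.nonempty_iff_ne_empty.mpr h0
      revert heE
      refine Sym2.ind (fun a c heE => ?_) e
      have hadj : I.G.Adj a c := I.G.mem_edgeSet.mp heE
      obtain ⟨u, v, hLuv⟩ := I.exists_lovingPair hI hadj
      have hbu : 1 ≤ I.b u := by
        by_contra h
        exact hp u (by omega) v hLuv.1
      have hbv : 1 ≤ I.b v := by
        by_contra h
        exact hp v (by omega) u hLuv.1.symm
      set J := I.dropPair u v with hJdef
      have hJG : J.G = I.G.deleteEdges {s(u, v)} := rfl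
      have hss : J.G.edgeSet ⊂ I.G.edgeSet := by
        rw [hJG, SimpleGraph.edgeSet_deleteEdges, Set.ssubset_def]
        refine ⟨Set.diff_subset, fun hsub => ?_⟩
        have h1 : s(u, v) ∈ I.G.edgeSet := I.G.mem_edgeSet.mpr hLuv.1
        exact (hsub h1).2 rfl
      have hlt : J.G.edgeSet.ncard < n := by
        rw [← hcard]
        exact Set.ncard_lt_ncard hss (Set.toFinite _)
      have hJacyc : J.Acyclic :=
        acyclic_mono (SimpleGraph.deleteEdges_le _) rfl hI
      obtain ⟨C0, hC0, huniq⟩ := ih _ hlt J hJacyc rfl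
      have heC0 : s(u, v) ∉ C0 := by
        intro h
        have hmem := hC0.1.1 _ h
        rw [hJG, SimpleGraph.edgeSet_deleteEdges] at hmem
        exact hmem.2 rfl
      refine ⟨insert s(u, v) C0, (I.drop_stable_iff hLuv hbu hbv heC0).mpr hC0, ?_⟩
      intro C hC
      have heC : s(u, v) ∈ C := I.lovingPair_mem_stable hLuv hbu hbv hC
      have h1 : J.IsStable (C.erase s(u, v)) :=
        (I.drop_stable_iff hLuv hbu hbv (Finset.notMem_erase _ _)).mp
          (by rwa [Finset.insert_erase heC])
      rw [← Finset.insert_erase heC, huniq _ h1]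
end

section
/- Every acyclic b-matching preference instance has at least one stable configuration. -/
/-!
A formalization of b-matching preference instances (peers, acceptance graph,
quotas, preference lists given by ranks), configurations, blocking pairs,
stability, active initiatives, loving pairs, and acyclicity.
-/

open Finset

variable {P : Type*} [Fintype P] [DecidableEq P]

open PrefInstance


namespace StableAux

open SimpleGraph

variable {P : Type*} [Fintype P] [DecidableEq P]

/-- `Nbr E p`: the peers joined to `p` by an edge of `E`. -/
def Nbr (E : Finset (Sym2 P)) (p : P) : Finset P :=
  Finset.univ.filter fun r => s(p, r) ∈ E

lemma mem_Nbr {E : Finset (Sym2 P)} {p r : P} : r ∈ Nbr E p ↔ s(p, r) ∈ E := by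
  simp [Nbr]

lemma Nbr_symm {E : Finset (Sym2 P)} {p r : P} (h : r ∈ Nbr E p) : p ∈ Nbr E r := by
  rw [mem_Nbr] at h ⊢; rwa [Sym2.eq_swap]

/-- The best `E`-neighbor of `p` (or `p` itself if none). -/
noncomputable def bestf (I : PrefInstance P) (E : Finset (Sym2 P)) (p : P) : P :=
  if h : (Nbr E p).Nonempty then
    (Finset.exists_min_image (Nbr E p) (I.rank p) h).choose
  else p

lemma bestf_mem (I : PrefInstance P) {E : Finset (Sym2 P)} {p : P}
    (h : (Nbr E p).Nonempty) : bestf I E p ∈ Nbr E p := by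
  rw [bestf, dif_pos h]
  exact (Finset.exists_min_image (Nbr E p) (I.rank p) h).choose_spec.1

lemma bestf_min (I : PrefInstance P) {E : Finset (Sym2 P)} {p : P}
    (h : (Nbr E p).Nonempty) : ∀ r ∈ Nbr E p, I.rank p (bestf I E p) ≤ I.rank p r := by
  rw [bestf, dif_pos h]
  exact (Finset.exists_min_image (Nbr E p) (I.rank p) h).choose_spec.2

lemma adj_of_mem {I : PrefInstance P} {E : Finset (Sym2 P)}
    (hE : ∀ e ∈ E, e ∈ I.G.edgeSet) {p r : P} (h : s(p, r) ∈ E) : I.G.Adj p r :=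
  (I.G.mem_edgeSet).1 (hE _ h)

/-- In an acyclic instance, every nonempty set of acceptance-graph edges
contains a loving pair (mutually best within `E`). -/
lemma exists_loving (I : PrefInstance P) (hI : I.Acyclic) (E : Finset (Sym2 P))
    (hE : ∀ e ∈ E, e ∈ I.G.edgeSet) (hne : E.Nonempty) :
    ∃ p q : P, s(p, q) ∈ E ∧ (∀ r, s(p, r) ∈ E → I.rank p q ≤ I.rank p r) ∧
      (∀ r, s(q, r) ∈ E → I.rank q p ≤ I.rank q r) := by
  classical
  obtain ⟨e, he⟩ := hne
  obtain ⟨a, b, rfl⟩ : ∃ a b : P, e = s(a, b) :=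
    Sym2.ind (fun a b => ⟨a, b, rfl⟩) e
  set f : P → P := bestf I E with hf
  have hfne : ∀ p : P, (Nbr E p).Nonempty → f p ≠ p := by
    intro p hp
    have := adj_of_mem hE (mem_Nbr.1 (bestf_mem I hp))
    exact this.ne'
  have hiter : ∀ n : ℕ, (Nbr E (f^[n] a)).Nonempty := by
    intro n
    induction n with
    | zero => exact ⟨b, mem_Nbr.2 he⟩
    | succ n ih =>
      rw [Function.iterate_succ_apply']
      exact ⟨f^[n] a, Nbr_symm (bestf_mem I ih)⟩
  obtain ⟨m, n, hmn, heq⟩ := Finite.exists_ne_map_eq_of_infinite (fun n : ℕ => f^[n] a)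
  wlog hlt : m < n generalizing m n
  · exact this n m hmn.symm heq.symm (by omega)
  set x : P := f^[m] a with hx
  have hper : 0 < n - m ∧ f^[n - m] x = x := by
    constructor
    · omega
    · rw [hx, ← Function.iterate_add_apply]
      have : n - m + m = n := by omega
      rw [this]; exact heq.symm
  have hex : ∃ s : ℕ, 0 < s ∧ f^[s] x = x := ⟨n - m, hper⟩
  set d : ℕ := Nat.find hex with hd
  have hdspec : 0 < d ∧ f^[d] x = x := Nat.find_spec hex
  have hdmin : ∀ s < d, ¬(0 < s ∧ f^[s] x = x) := fun s hs => Nat.find_min hex hs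
  have hxiter : ∀ k : ℕ, (Nbr E (f^[k] x)).Nonempty := by
    intro k; rw [hx, ← Function.iterate_add_apply]; exact hiter (k + m)
  have hd1 : d ≠ 1 := by
    intro h
    have := hdspec.2
    rw [h, Function.iterate_one] at this
    exact hfne x (hxiter 0) this
  by_cases hd2 : d = 2
  · -- loving pair x, f x
    refine ⟨x, f x, mem_Nbr.1 (bestf_mem I (hxiter 0)), ?_, ?_⟩
    · intro r hr
      exact bestf_min I (hxiter 0) r (mem_Nbr.2 hr)
    · intro r hr
      have h2 : f (f x) = x := by
        have := hdspec.2; rw [hd2] at this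
        simpa [Function.iterate_succ_apply'] using this
      have := bestf_min I (hxiter 1) r (mem_Nbr.2 hr)
      simpa [← hf, h2] using this
  · -- d ≥ 3 : contradiction with acyclicity
    exfalso
    have hd3 : 3 ≤ d := by
      rcases hdspec with ⟨h1, -⟩; omega
    haveI : NeZero d := ⟨by omega⟩
    haveI : Fact (1 < d) := ⟨by omega⟩
    apply hI
    refine ⟨d, fun i => f^[(i : ZMod d).val] x, hd3, ?_, ?_⟩
    · have key2 : ∀ i j : ZMod d, f^[i.val] x = f^[j.val] x → i.val < j.val → False := by
        intro i j hij hvlt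
        have hjlt := ZMod.val_lt j
        have key : f^[d - j.val + i.val] x = x := by
          rw [Function.iterate_add_apply, hij, ← Function.iterate_add_apply]
          have : d - j.val + j.val = d := by omega
          rw [this]; exact hdspec.2
        exact hdmin (d - j.val + i.val) (by omega) ⟨by omega, key⟩
      intro i j hij
      simp only at hij
      apply ZMod.val_injective d
      rcases lt_trichotomy i.val j.val with h | h | h
      · exact absurd (key2 i j hij h) (fun hc => hc)
      · exact h
      · exact absurd (key2 j i hij.symm h) (fun hc => hc)
    · have step : ∀ i : ZMod d, f^[(i + 1).val] x = f (f^[i.val] x) := by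
        intro i
        have hv : (i + 1).val = (i.val + 1) % d := by
          rw [ZMod.val_add, ZMod.val_one]
        have hivlt := ZMod.val_lt i
        by_cases h : i.val + 1 < d
        · rw [hv, Nat.mod_eq_of_lt h, Function.iterate_succ_apply']
        · have h' : i.val + 1 = d := by omega
          rw [hv, h', Nat.mod_self, Function.iterate_zero_apply]
          have h2 : f^[i.val + 1] x = f (f^[i.val] x) := Function.iterate_succ_apply' f _ x
          rw [h'] at h2
          rw [← h2]
          exact hdspec.2.symm
      intro i
      have hsucc : f^[(i + 1).val] x = f (f^[i.val] x) := step i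
      have hprev : f^[i.val] x = f (f^[(i - 1).val] x) := by
        have h3 := step (i - 1)
        have h4 : i - 1 + 1 = i := by ring
        rwa [h4] at h3
      set p := f^[i.val] x with hp
      have hnext_mem : f^[(i + 1).val] x ∈ Nbr E p := hsucc ▸ bestf_mem I (hxiter i.val)
      have hprev_mem : f^[(i - 1).val] x ∈ Nbr E p := by
        apply Nbr_symm
        have h5 := bestf_mem I (hxiter (i - 1).val)
        rw [← hf] at h5
        rwa [← hprev] at h5
      have hadj1 : I.G.Adj p (f^[(i + 1).val] x) := adj_of_mem hE (mem_Nbr.1 hnext_mem)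
      have hadj2 : I.G.Adj p (f^[(i - 1).val] x) := adj_of_mem hE (mem_Nbr.1 hprev_mem)
      refine ⟨hadj1, hadj2, ?_⟩
      have hle : I.rank p (f^[(i + 1).val] x) ≤ I.rank p (f^[(i - 1).val] x) := by
        rw [hsucc]
        exact bestf_min I (hxiter i.val) _ hprev_mem
      have hne2 : f^[(i + 1).val] x ≠ f^[(i - 1).val] x := by
        intro h
        have hvv : (i + 1 : ZMod d).val = (i - 1 : ZMod d).val := by
          by_contra hc
          rcases Nat.lt_or_ge (i + 1 : ZMod d).val (i - 1 : ZMod d).val with hlt' | hge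
          · have hjlt := ZMod.val_lt (i - 1 : ZMod d)
            have key : f^[d - (i - 1 : ZMod d).val + (i + 1 : ZMod d).val] x = x := by
              rw [Function.iterate_add_apply, h, ← Function.iterate_add_apply]
              have : d - (i - 1 : ZMod d).val + (i - 1 : ZMod d).val = d := by omega
              rw [this]; exact hdspec.2
            exact hdmin _ (by omega) ⟨by omega, key⟩
          · have hlt' : (i - 1 : ZMod d).val < (i + 1 : ZMod d).val := by omega
            have hjlt := ZMod.val_lt (i + 1 : ZMod d)
            have key : f^[d - (i + 1 : ZMod d).val + (i - 1 : ZMod d).val] x = x := by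
              rw [Function.iterate_add_apply, ← h, ← Function.iterate_add_apply]
              have : d - (i + 1 : ZMod d).val + (i + 1 : ZMod d).val = d := by omega
              rw [this]; exact hdspec.2
            exact hdmin _ (by omega) ⟨by omega, key⟩
        have : (i + 1 : ZMod d) = i - 1 := ZMod.val_injective d hvv
        have h2 : (2 : ZMod d) = 0 := by linear_combination this
        have hdvd : d ∣ 2 := by
          have := (ZMod.natCast_eq_zero_iff 2 d).1 (by exact_mod_cast h2)
          exact this
        have := Nat.le_of_dvd (by norm_num) hdvd
        omega
      exact lt_of_le_of_ne hle fun hcontra =>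
        hne2 (I.rank_injOn p hadj1 hadj2 hcontra)

variable (I : PrefInstance P)

/-- `p` is saturated against `y`: full quota, all mates strictly better than `y`. -/
def Sat (β : P → ℕ) (C : Finset (Sym2 P)) (p y : P) : Prop :=
  (PrefInstance.mates C p).card = β p ∧
    ∀ m ∈ PrefInstance.mates C p, I.rank p m < I.rank p y

/-- The invariant of the greedy construction. -/
def Good (β : P → ℕ) (E C : Finset (Sym2 P)) : Prop :=
  C ⊆ E ∧ (∀ r : P, (PrefInstance.mates C r).card ≤ β r) ∧
    ∀ p q : P, s(p, q) ∈ E → s(p, q) ∉ C → Sat I β C p q ∨ Sat I β C q p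

lemma mem_mates {C : Finset (Sym2 P)} {p q : P} :
    q ∈ PrefInstance.mates C p ↔ s(p, q) ∈ C := by
  simp [PrefInstance.mates]

lemma mates_insert_left {C : Finset (Sym2 P)} {p q : P} :
    PrefInstance.mates (insert s(p, q) C) p = insert q (PrefInstance.mates C p) := by
  ext m
  simp only [mem_mates, Finset.mem_insert, Sym2.eq_iff]
  aesop

lemma mates_insert_right {C : Finset (Sym2 P)} {p q : P} :
    PrefInstance.mates (insert s(p, q) C) q = insert p (PrefInstance.mates C q) := by
  rw [Sym2.eq_swap, mates_insert_left]

lemma mates_insert_other {C : Finset (Sym2 P)} {p q r : P} (h1 : r ≠ p) (h2 : r ≠ q) :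
    PrefInstance.mates (insert s(p, q) C) r = PrefInstance.mates C r := by
  ext m
  simp only [mem_mates, Finset.mem_insert, Sym2.eq_iff]
  aesop

lemma mates_empty_of_no_edge {C : Finset (Sym2 P)} {p : P}
    (h : ∀ e ∈ C, p ∉ e) : PrefInstance.mates C p = ∅ := by
  ext m
  simp only [mem_mates, Finset.notMem_empty, iff_false]
  intro hm
  exact h _ hm (by simp)

lemma mates_mono {C D : Finset (Sym2 P)} (h : C ⊆ D) (p : P) :
    PrefInstance.mates C p ⊆ PrefInstance.mates D p := by
  intro m hm
  exact mem_mates.2 (h (mem_mates.1 hm))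

/-- Main construction lemma: for every edge set `E` inside the acceptance graph
and every quota function `β`, there is a set `C ⊆ E` satisfying `Good`. -/
lemma exists_good (hI : I.Acyclic) :
    ∀ (n : ℕ) (E : Finset (Sym2 P)), E.card ≤ n → (∀ e ∈ E, e ∈ I.G.edgeSet) →
      ∀ β : P → ℕ, ∃ C : Finset (Sym2 P), Good I β E C := by
  intro n
  induction n with
  | zero =>
    intro E hc _ β
    have : E = ∅ := Finset.card_eq_zero.1 (Nat.le_zero.1 hc)
    subst this
    refine ⟨∅, Finset.Subset.refl _, ?_, ?_⟩
    · intro r; simp [PrefInstance.mates]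
    · intro p q h; simp at h
  | succ n ih =>
    intro E hc hE β
    rcases Finset.eq_empty_or_nonempty E with rfl | hne
    · refine ⟨∅, Finset.Subset.refl _, ?_, ?_⟩
      · intro r; simp [PrefInstance.mates]
      · intro p q h; simp at h
    obtain ⟨p, q, hpqE, hbp, hbq⟩ := exists_loving I hI E hE hne
    have hadj : I.G.Adj p q := adj_of_mem hE hpqE
    have hpq : p ≠ q := hadj.ne
    -- helper: strict preference of p for q over any other E-neighbor y ≠ q
    have keyp : ∀ y : P, s(p, y) ∈ E → y ≠ q → I.rank p q < I.rank p y := by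
      intro y hy hyq
      have hadjy : I.G.Adj p y := adj_of_mem hE hy
      exact lt_of_le_of_ne (hbp y hy) fun h => hyq (I.rank_injOn p hadj hadjy h).symm
    have keyq : ∀ y : P, s(q, y) ∈ E → y ≠ p → I.rank q p < I.rank q y := by
      intro y hy hyp
      have hadjy : I.G.Adj q y := adj_of_mem hE hy
      exact lt_of_le_of_ne (hbq y hy) fun h => hyp (I.rank_injOn q hadj.symm hadjy h).symm
    by_cases hβp : β p = 0
    · -- discard all edges at p
      set E' := E.filter (fun e => p ∉ e) with hE'
      have hcard' : E'.card ≤ n := by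
        have hsub : E' ⊆ E.erase s(p, q) := by
          intro e heE'
          rw [hE', Finset.mem_filter] at heE'
          refine Finset.mem_erase.2 ⟨?_, heE'.1⟩
          intro h
          exact heE'.2 (h ▸ by simp)
        have h1 := Finset.card_le_card hsub
        have h2 := Finset.card_erase_lt_of_mem hpqE
        omega
      have hE'sub : ∀ e ∈ E', e ∈ I.G.edgeSet := fun e he =>
        hE e (Finset.mem_filter.1 he).1
      obtain ⟨C, hCE', hquota, hsat⟩ := ih E' hcard' hE'sub β
      have hnoedge : ∀ e ∈ C, p ∉ e := fun e he =>
        (Finset.mem_filter.1 (hCE' he)).2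
      have hmp : PrefInstance.mates C p = ∅ := mates_empty_of_no_edge hnoedge
      refine ⟨C, fun e he => (Finset.mem_filter.1 (hCE' he)).1, hquota, ?_⟩
      intro x y hxyE hxyC
      by_cases hpx : p = x
      · subst hpx
        left
        refine ⟨by rw [hmp, hβp]; rfl, ?_⟩
        intro m hm; rw [hmp] at hm; exact absurd hm (Finset.notMem_empty m)
      by_cases hpy : p = y
      · subst hpy
        right
        refine ⟨by rw [hmp, hβp]; rfl, ?_⟩
        intro m hm; rw [hmp] at hm; exact absurd hm (Finset.notMem_empty m)
      · have : s(x, y) ∈ E' := by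
          rw [hE', Finset.mem_filter]
          refine ⟨hxyE, ?_⟩
          rw [Sym2.mem_iff]
          rintro (rfl | rfl)
          · exact hpx rfl
          · exact hpy rfl
        exact hsat x y this hxyC
    by_cases hβq : β q = 0
    · -- discard all edges at q (symmetric)
      set E' := E.filter (fun e => q ∉ e) with hE'
      have hcard' : E'.card ≤ n := by
        have hsub : E' ⊆ E.erase s(p, q) := by
          intro e heE'
          rw [hE', Finset.mem_filter] at heE'
          refine Finset.mem_erase.2 ⟨?_, heE'.1⟩
          intro h
          exact heE'.2 (h ▸ by simp)
        have h1 := Finset.card_le_card hsub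
        have h2 := Finset.card_erase_lt_of_mem hpqE
        omega
      have hE'sub : ∀ e ∈ E', e ∈ I.G.edgeSet := fun e he =>
        hE e (Finset.mem_filter.1 he).1
      obtain ⟨C, hCE', hquota, hsat⟩ := ih E' hcard' hE'sub β
      have hnoedge : ∀ e ∈ C, q ∉ e := fun e he =>
        (Finset.mem_filter.1 (hCE' he)).2
      have hmq : PrefInstance.mates C q = ∅ := mates_empty_of_no_edge hnoedge
      refine ⟨C, fun e he => (Finset.mem_filter.1 (hCE' he)).1, hquota, ?_⟩
      intro x y hxyE hxyC
      by_cases hqx : q = x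
      · subst hqx
        left
        refine ⟨by rw [hmq, hβq]; rfl, ?_⟩
        intro m hm; rw [hmq] at hm; exact absurd hm (Finset.notMem_empty m)
      by_cases hqy : q = y
      · subst hqy
        right
        refine ⟨by rw [hmq, hβq]; rfl, ?_⟩
        intro m hm; rw [hmq] at hm; exact absurd hm (Finset.notMem_empty m)
      · have : s(x, y) ∈ E' := by
          rw [hE', Finset.mem_filter]
          refine ⟨hxyE, ?_⟩
          rw [Sym2.mem_iff]
          rintro (rfl | rfl)
          · exact hqx rfl
          · exact hqy rfl
        exact hsat x y this hxyC
    · -- main step: add the loving pair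
      have hp1 : 1 ≤ β p := Nat.one_le_iff_ne_zero.2 hβp
      have hq1 : 1 ≤ β q := Nat.one_le_iff_ne_zero.2 hβq
      set E' := E.filter (fun e => e ≠ s(p, q) ∧ (β p = 1 → p ∉ e) ∧ (β q = 1 → q ∉ e))
        with hE'
      set β' : P → ℕ := fun r => if r = p then β p - 1 else if r = q then β q - 1 else β r
        with hβ'
      have hcard' : E'.card ≤ n := by
        have hsub : E' ⊆ E.erase s(p, q) := by
          intro e heE'
          rw [hE', Finset.mem_filter] at heE'
          exact Finset.mem_erase.2 ⟨heE'.2.1, heE'.1⟩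
        have h1 := Finset.card_le_card hsub
        have h2 := Finset.card_erase_lt_of_mem hpqE
        omega
      have hE'sub : ∀ e ∈ E', e ∈ I.G.edgeSet := fun e he =>
        hE e (Finset.mem_filter.1 he).1
      obtain ⟨C', hC'E', hquota', hsat'⟩ := ih E' hcard' hE'sub β'
      have hpqE' : s(p, q) ∉ E' := by
        rw [hE', Finset.mem_filter]
        rintro ⟨-, h, -⟩
        exact h rfl
      have hqnot : q ∉ PrefInstance.mates C' p := fun h => hpqE' (hC'E' (mem_mates.1 h))
      have hpnot : p ∉ PrefInstance.mates C' q := fun h => by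
        have := hC'E' (mem_mates.1 h)
        rw [Sym2.eq_swap] at this
        exact hpqE' this
      set C := insert s(p, q) C' with hC
      have hmatesP : PrefInstance.mates C p = insert q (PrefInstance.mates C' p) :=
        mates_insert_left
      have hmatesQ : PrefInstance.mates C q = insert p (PrefInstance.mates C' q) :=
        mates_insert_right
      have hmatesO : ∀ r, r ≠ p → r ≠ q →
          PrefInstance.mates C r = PrefInstance.mates C' r :=
        fun r h1 h2 => mates_insert_other h1 h2
      -- if β p = 1, C' has no edges at p
      have hmp1 : β p = 1 → PrefInstance.mates C' p = ∅ := by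
        intro h1
        apply mates_empty_of_no_edge
        intro e he
        exact (Finset.mem_filter.1 (hC'E' he)).2.2.1 h1
      have hmq1 : β q = 1 → PrefInstance.mates C' q = ∅ := by
        intro h1
        apply mates_empty_of_no_edge
        intro e he
        exact (Finset.mem_filter.1 (hC'E' he)).2.2.2 h1
      refine ⟨C, ?_, ?_, ?_⟩
      · -- C ⊆ E
        intro e he
        rcases Finset.mem_insert.1 he with rfl | he'
        · exact hpqE
        · exact (Finset.mem_filter.1 (hC'E' he')).1
      · -- quotas
        intro r
        have hq := hquota' r
        by_cases hrp : r = p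
        · subst hrp
          have hb : β' r = β r - 1 := by simp [hβ']
          rw [hmatesP]
          have hci := Finset.card_insert_le q (PrefInstance.mates C' r)
          omega
        by_cases hrq : r = q
        · subst hrq
          have hb : β' r = β r - 1 := by simp [hβ', hpq.symm]
          rw [hmatesQ]
          have hci := Finset.card_insert_le p (PrefInstance.mates C' r)
          omega
        · rw [hmatesO r hrp hrq]
          have hb : β' r = β r := by simp [hβ', hrp, hrq]
          omega
      · -- saturation condition
        intro x y hxyE hxyC
        have hnepq : s(x, y) ≠ s(p, q) := fun h => hxyC (h ▸ Finset.mem_insert_self _ _)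
        have hxyC' : s(x, y) ∉ C' := fun h => hxyC (Finset.mem_insert_of_mem h)
        -- the lifting of a saturation certificate from (β', C') to (β, C)
        have lift : ∀ u v : P, s(u, v) ∈ E → s(u, v) ≠ s(p, q) →
            (PrefInstance.mates C' u).card = β' u →
            (∀ m ∈ PrefInstance.mates C' u, I.rank u m < I.rank u v) →
            (PrefInstance.mates C u).card = β u ∧
              ∀ m ∈ PrefInstance.mates C u, I.rank u m < I.rank u v := by
          intro u v huvE huvne hcardu hallu
          by_cases hup : u = p
          · subst hup
            have hvq : v ≠ q := by
              intro h; exact huvne (h ▸ rfl)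
            rw [hmatesP]
            constructor
            · have hb : β' u = β u - 1 := by simp [hβ']
              rw [Finset.card_insert_of_notMem hqnot, hcardu]
              omega
            · intro m hm
              rcases Finset.mem_insert.1 hm with rfl | hm'
              · exact keyp v huvE hvq
              · exact hallu m hm'
          by_cases huq : u = q
          · subst huq
            have hvp : v ≠ p := by
              intro h
              subst h
              exact huvne (Sym2.eq_swap)
            rw [hmatesQ]
            constructor
            · have hb : β' u = β u - 1 := by simp [hβ', hpq.symm]
              rw [Finset.card_insert_of_notMem hpnot, hcardu]
              omega
            · intro m hm
              rcases Finset.mem_insert.1 hm with rfl | hm'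
              · exact keyq v huvE hvp
              · exact hallu m hm'
          · rw [hmatesO u hup huq]
            refine ⟨?_, hallu⟩
            have hb : β' u = β u := by simp [hβ', hup, huq]
            omega
        by_cases hxyE' : s(x, y) ∈ E'
        · rcases hsat' x y hxyE' hxyC' with ⟨hcard1, hall1⟩ | ⟨hcard1, hall1⟩
          · exact Or.inl (lift x y hxyE hnepq hcard1 hall1)
          · refine Or.inr (lift y x ?_ ?_ hcard1 hall1)
            · rwa [Sym2.eq_swap]
            · rw [Sym2.eq_swap]; exact hnepq
        · -- the edge was discarded because p or q reached quota 1
          have hdisc : (β p = 1 ∧ p ∈ s(x, y)) ∨ (β q = 1 ∧ q ∈ s(x, y)) := by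
            rw [hE', Finset.mem_filter] at hxyE'
            push_neg at hxyE'
            by_cases hbp1 : β p = 1 → p ∉ s(x, y)
            · exact Or.inr (hxyE' hxyE hnepq hbp1)
            · push_neg at hbp1
              exact Or.inl hbp1
          -- saturation at a peer z ∈ {p, q} with β z = 1
          have satp : β p = 1 → ∀ v, s(p, v) ∈ E → v ≠ q →
              (PrefInstance.mates C p).card = β p ∧
                ∀ m ∈ PrefInstance.mates C p, I.rank p m < I.rank p v := by
            intro h1 v hv hvq
            rw [hmatesP, hmp1 h1]
            constructor
            · simp [h1]
            · intro m hm
              rcases Finset.mem_insert.1 hm with rfl | hm'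
              · exact keyp v hv hvq
              · exact absurd hm' (Finset.notMem_empty m)
          have satq : β q = 1 → ∀ v, s(q, v) ∈ E → v ≠ p →
              (PrefInstance.mates C q).card = β q ∧
                ∀ m ∈ PrefInstance.mates C q, I.rank q m < I.rank q v := by
            intro h1 v hv hvp
            rw [hmatesQ, hmq1 h1]
            constructor
            · simp [h1]
            · intro m hm
              rcases Finset.mem_insert.1 hm with rfl | hm'
              · exact keyq v hv hvp
              · exact absurd hm' (Finset.notMem_empty m)
          rcases hdisc with ⟨h1, hmem⟩ | ⟨h1, hmem⟩
          · rcases Sym2.mem_iff.1 hmem with rfl | rfl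
            · -- x = p
              left
              refine satp h1 y hxyE ?_
              intro h; subst h; exact hnepq rfl
            · -- y = p
              right
              refine satp h1 x (by rwa [Sym2.eq_swap]) ?_
              intro h
              subst h
              exact hnepq Sym2.eq_swap
          · rcases Sym2.mem_iff.1 hmem with rfl | rfl
            · -- x = q
              left
              refine satq h1 y hxyE ?_
              intro h
              subst h
              exact hnepq Sym2.eq_swap
            · -- y = q
              right
              refine satq h1 x (by rwa [Sym2.eq_swap]) ?_
              intro h
              subst h
              exact hnepq rfl

end StableAux

/-- Every acyclic b-matching preference instance has at least
one stable configuration. -/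
theorem acyclic_exists_stable (I : PrefInstance P) (hI : I.Acyclic) :
    ∃ C : Finset (Sym2 P), I.IsStable C := by
  classical
  obtain ⟨C, hCE, hquota, hsat⟩ :=
    StableAux.exists_good I hI (Finset.univ.filter fun e => e ∈ I.G.edgeSet).card
      (Finset.univ.filter fun e => e ∈ I.G.edgeSet) le_rfl
      (fun e he => (Finset.mem_filter.1 he).2) I.b
  refine ⟨C, ⟨fun e he => (Finset.mem_filter.1 (hCE he)).2, hquota⟩, ?_⟩
  rintro p q ⟨hadj, hnotC, hwp, hwq⟩
  have hmem : s(p, q) ∈ Finset.univ.filter fun e => e ∈ I.G.edgeSet := by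
    simp [SimpleGraph.mem_edgeSet, hadj]
  have hnw : ∀ u v : P, (PrefInstance.mates C u).card = I.b u →
      (∀ m ∈ PrefInstance.mates C u, I.rank u m < I.rank u v) → ¬ I.Willing C u v := by
    rintro u v hcard hall (hum | ⟨w, hw, hrw⟩)
    · exact absurd hum (by rw [PrefInstance.UnderMated, hcard]; exact lt_irrefl _)
    · exact absurd hrw (not_lt.2 (le_of_lt (hall w hw)))
  rcases hsat p q hmem hnotC with ⟨hcard, hall⟩ | ⟨hcard, hall⟩
  · exact hnw p q hcard hall hwp
  · exact hnw q p hcard hall hwq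
end

section
/- In an acyclic b-matching preference instance, a sequence of active initiatives never visits the same configuration twice: if C_0, C_1, …, C_k is a sequence of configurations in which each C_{i+1} is obtained from C_i by an active initiative, then the configurations C_0, …, C_k are pairwise distinct. -/
/-!
A formalization of b-matching preference instances (peers, acceptance graph,
quotas, preference lists given by ranks), configurations, blocking pairs,
stability, active initiatives, loving pairs, and acyclicity.
-/

open Finset

variable {P : Type*} [Fintype P] [DecidableEq P]

open PrefInstance

/-! ### Auxiliary development for Statement 3 -/

open scoped Classical

/-- Auxiliary relation on edges: `e` is preferred to `e'` at some common peer. -/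
def auxELT (I : PrefInstance P) (e e' : Sym2 P) : Prop :=
  ∃ p q r : P, I.Prefers p q r ∧ e = s(p, q) ∧ e' = s(p, r)

/-- An edge cycle of length `n` for the relation `auxELT`. -/
def auxECyc (I : PrefInstance P) (n : ℕ) : Prop :=
  ∃ F : ZMod n → Sym2 P, ∀ i : ZMod n, auxELT I (F i) (F (i + 1))

lemma aux_zval_add_one {n : ℕ} [NeZero n] (i : ZMod n) :
    (i + 1).val = (i.val + 1) % n := by
  rw [ZMod.val_add, ZMod.val_one_eq_one_mod]
  conv_rhs => rw [Nat.add_mod, Nat.mod_eq_of_lt (ZMod.val_lt i)]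

lemma aux_cast_val {n : ℕ} [NeZero n] (d : ZMod n) :
    ((d.val : ℕ) : ZMod n) = d := ZMod.natCast_rightInverse d

lemma aux_no_dup (I : PrefInstance P) {n : ℕ} (hn : 0 < n)
    (hmin : ∀ m, 0 < m → m < n → ¬ auxECyc I m)
    (F : ZMod n → Sym2 P) (p a c : ZMod n → P)
    (h1 : ∀ i, I.Prefers (p i) (a i) (c i))
    (h2 : ∀ i, F i = s(p i, a i))
    (h3 : ∀ i, F (i + 1) = s(p i, c i))
    (d : ZMod n) (hd : d ≠ 0) (hpd : p 0 = p d) : False := by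
  haveI : NeZero n := ⟨hn.ne'⟩
  have hF : ∀ t : ZMod n, auxELT I (F t) (F (t + 1)) :=
    fun t => ⟨p t, a t, c t, h1 t, h2 t, h3 t⟩
  have hdv : 0 < d.val :=
    Nat.pos_of_ne_zero (fun h => hd ((ZMod.val_eq_zero d).mp h))
  have hdn : d.val < n := ZMod.val_lt d
  rcases lt_or_ge (I.rank (p 0) (a d)) (I.rank (p 0) (c 0)) with hA | hB
  · -- shortcut cycle of length `d.val`
    haveI : NeZero d.val := ⟨hdv.ne'⟩
    apply hmin d.val hdv hdn
    refine ⟨fun j => F ((j.val + 1 : ℕ)), fun j => ?_⟩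
    beta_reduce
    rcases Nat.lt_or_ge (j.val + 1) d.val with hlt | hge
    · have hv : (j + 1).val = j.val + 1 := by
        rw [aux_zval_add_one, Nat.mod_eq_of_lt hlt]
      rw [hv]
      have h := hF ((j.val + 1 : ℕ) : ZMod n)
      rwa [show ((j.val + 1 : ℕ) : ZMod n) + 1 = ((j.val + 1 + 1 : ℕ) : ZMod n) from by
        push_cast; ring] at h
    · have hv1 : j.val + 1 = d.val := by have := ZMod.val_lt j; omega
      have hv : (j + 1).val = 0 := by rw [aux_zval_add_one, hv1, Nat.mod_self]
      rw [hv, hv1, aux_cast_val]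
      refine ⟨p 0, a d, c 0, ⟨?_, (h1 0).2.1, hA⟩, ?_, ?_⟩
      · have := (h1 d).1; rwa [← hpd] at this
      · rw [h2 d, ← hpd]
      · rw [show ((0 + 1 : ℕ) : ZMod n) = (0 : ZMod n) + 1 from by push_cast; ring, h3 0]
  · -- shortcut cycle of length `n - d.val`
    have hB' : I.rank (p 0) (a 0) < I.rank (p 0) (c d) := by
      have l1 := (h1 0).2.2
      have l2 := (h1 d).2.2
      rw [← hpd] at l2
      omega
    have hm0 : 0 < n - d.val := by omega
    haveI : NeZero (n - d.val) := ⟨hm0.ne'⟩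
    apply hmin (n - d.val) hm0 (by omega)
    refine ⟨fun j => F ((j.val + d.val + 1 : ℕ)), fun j => ?_⟩
    beta_reduce
    rcases Nat.lt_or_ge (j.val + 1) (n - d.val) with hlt | hge
    · have hv : (j + 1).val = j.val + 1 := by
        rw [aux_zval_add_one, Nat.mod_eq_of_lt hlt]
      rw [hv]
      have h := hF ((j.val + d.val + 1 : ℕ) : ZMod n)
      rwa [show ((j.val + d.val + 1 : ℕ) : ZMod n) + 1
          = ((j.val + 1 + d.val + 1 : ℕ) : ZMod n) from by push_cast; ring] at h
    · have hv1 : j.val + 1 = n - d.val := by have := ZMod.val_lt j; omega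
      have hv : (j + 1).val = 0 := by rw [aux_zval_add_one, hv1, Nat.mod_self]
      have e1 : ((j.val + d.val + 1 : ℕ) : ZMod n) = 0 := by
        rw [show j.val + d.val + 1 = n from by omega, ZMod.natCast_self]
      have e2 : ((0 + d.val + 1 : ℕ) : ZMod n) = d + 1 := by
        rw [show (0 + d.val + 1 : ℕ) = d.val + 1 from by omega]
        push_cast [aux_cast_val]
        rfl
      rw [hv, e1, e2]
      refine ⟨p 0, a 0, c d, ⟨(h1 0).1, ?_, hB'⟩, h2 0, ?_⟩
      · have := (h1 d).2.1; rwa [← hpd] at this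
      · rw [h3 d, ← hpd]

lemma aux_cycle_of_transGen (I : PrefInstance P) {e : Sym2 P}
    (h : Relation.TransGen (auxELT I) e e) : ∃ n, 0 < n ∧ auxECyc I n := by
  have key : ∀ e' : Sym2 P, Relation.TransGen (auxELT I) e e' →
      ∃ n, 0 < n ∧ ∃ g : ℕ → Sym2 P, g 0 = e ∧ g n = e' ∧
        ∀ i < n, auxELT I (g i) (g (i + 1)) := by
    intro e' h'
    induction h' with
    | @single b hb =>
        refine ⟨1, Nat.one_pos, fun i => if i = 0 then e else b, by simp, by simp, ?_⟩
        intro i hi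
        have hi0 : i = 0 := by omega
        subst hi0
        simpa using hb
    | @tail b cc hab hbc ih =>
        obtain ⟨n, hn, g, h0, hne, hs⟩ := ih
        refine ⟨n + 1, by omega, fun i => if i = n + 1 then cc else g i,
          by beta_reduce; rw [if_neg (by omega)]; exact h0, by simp, ?_⟩
        intro i hi
        beta_reduce
        rcases Nat.lt_succ_iff_lt_or_eq.mp hi with hlt | heq
        · rw [if_neg (by omega), if_neg (by omega)]
          exact hs i hlt
        · subst heq
          rw [if_neg (by omega), if_pos rfl, hne]
          exact hbc
  obtain ⟨n, hn, g, h0, hne, hs⟩ := key e h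
  haveI : NeZero n := ⟨hn.ne'⟩
  refine ⟨n, hn, fun i => g i.val, fun i => ?_⟩
  beta_reduce
  rcases Nat.lt_or_ge (i.val + 1) n with hlt | hge
  · have hv : (i + 1).val = i.val + 1 := by
      rw [aux_zval_add_one, Nat.mod_eq_of_lt hlt]
    rw [hv]
    exact hs i.val (by omega)
  · have hv0 : i.val = n - 1 := by have := ZMod.val_lt i; omega
    have hv : (i + 1).val = 0 := by
      rw [aux_zval_add_one, hv0, show n - 1 + 1 = n from by omega, Nat.mod_self]
    have hstep := hs (n - 1) (by omega)
    rw [show n - 1 + 1 = n from by omega, hne, ← h0] at hstep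
    rw [hv, hv0]
    exact hstep

/-- Key lemma: in an acyclic instance the transitive closure of `auxELT`
is irreflexive. -/
lemma aux_irrefl (I : PrefInstance P) (hI : I.Acyclic) (e : Sym2 P) :
    ¬ Relation.TransGen (auxELT I) e e := by
  intro h
  obtain ⟨n1, hn1, hc1⟩ := aux_cycle_of_transGen I h
  have hex : ∃ n, 0 < n ∧ auxECyc I n := ⟨n1, hn1, hc1⟩
  obtain ⟨n, hn0, hcyc, hmin⟩ :
      ∃ n, 0 < n ∧ auxECyc I n ∧ ∀ m, 0 < m → m < n → ¬ auxECyc I m :=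
    ⟨Nat.find hex, (Nat.find_spec hex).1, (Nat.find_spec hex).2,
      fun m hm1 hm2 hc => Nat.find_min hex hm2 ⟨hm1, hc⟩⟩
  obtain ⟨F, hF⟩ := hcyc
  haveI : NeZero n := ⟨hn0.ne'⟩
  simp only [auxELT] at hF
  choose p a c h1 h2 h3 using hF
  by_cases hone : n = 1
  · have e01 : (0 : ZMod n) + 1 = 0 := by
      subst hone
      exact Subsingleton.elim _ _
    have h30 := h3 0
    rw [e01, h2 0] at h30
    have hac : a 0 = c 0 := Sym2.congr_right.mp h30
    have := (h1 0).2.2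
    rw [hac] at this
    exact lt_irrefl _ this
  have hn2 : 2 ≤ n := by omega
  have hone_ne : (1 : ZMod n) ≠ 0 := by
    intro hcon
    have hv := congrArg ZMod.val hcon
    rw [ZMod.val_one_eq_one_mod, ZMod.val_zero, Nat.mod_eq_of_lt (by omega)] at hv
    omega
  have pinj : Function.Injective p := by
    intro i j hij
    by_contra hne
    refine aux_no_dup I hn0 hmin (fun t => F (t + i)) (fun t => p (t + i))
      (fun t => a (t + i)) (fun t => c (t + i))
      (fun t => h1 (t + i)) (fun t => h2 (t + i)) (fun t => ?_) (j - i)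
      (sub_ne_zero_of_ne (Ne.symm hne)) ?_
    · show F (t + 1 + i) = _
      rw [show t + 1 + i = t + i + 1 from by ring]
      exact h3 (t + i)
    · show p (0 + i) = p (j - i + i)
      rw [zero_add, sub_add_cancel]
      exact hij
  have hcons : ∀ i : ZMod n, c i = p (i + 1) ∧ a (i + 1) = p i := by
    intro i
    have h := (h3 i).symm.trans (h2 (i + 1))
    rw [Sym2.eq_iff] at h
    rcases h with ⟨hp, _⟩ | ⟨hp, hc⟩
    · exact absurd (left_eq_add.mp (pinj hp)) hone_ne
    · exact ⟨hc, hp.symm⟩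
  have ha : ∀ i : ZMod n, a i = p (i - 1) := by
    intro i
    have := (hcons (i - 1)).2
    rwa [sub_add_cancel] at this
  have hc : ∀ i : ZMod n, c i = p (i + 1) := fun i => (hcons i).1
  by_cases htwo : n = 2
  · have e1 : (0 : ZMod n) - 1 = 0 + 1 := by
      have : ((2 : ℕ) : ZMod n) = 0 := by rw [← htwo]; exact_mod_cast ZMod.natCast_self n
      have h2' : (2 : ZMod n) = 0 := by exact_mod_cast this
      have : (1 : ZMod n) + 1 = 0 := by rw [← h2']; ring
      linear_combination -this
    have hpre := (h1 0).2.2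
    rw [ha 0, hc 0, e1] at hpre
    exact lt_irrefl _ hpre
  have hn3 : 3 ≤ n := by omega
  apply hI
  refine ⟨n, fun i => p (-i), hn3, pinj.comp neg_injective, fun i => ?_⟩
  have hpre := h1 (-i)
  rw [ha, hc] at hpre
  show I.Prefers (p (-i)) (p (-(i + 1))) (p (-(i - 1)))
  rw [show -(i + 1) = -i - 1 from by ring, show -(i - 1) = -i + 1 from by ring]
  exact hpre

/-- Weight of an edge: the number of edges strictly below it in the
transitive closure of `auxELT`. -/
noncomputable def auxWt (I : PrefInstance P) (e : Sym2 P) : ℕ :=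
  (Finset.univ.filter fun x => Relation.TransGen (auxELT I) x e).card

lemma auxWt_lt (I : PrefInstance P) (hI : I.Acyclic) {e e' : Sym2 P}
    (h : auxELT I e e') : auxWt I e < auxWt I e' := by
  apply Finset.card_lt_card
  rw [Finset.ssubset_iff_of_subset]
  · exact ⟨e, Finset.mem_filter.mpr ⟨Finset.mem_univ _, Relation.TransGen.single h⟩,
      fun hmem => aux_irrefl I hI e (Finset.mem_filter.mp hmem).2⟩
  · intro x hx
    rw [Finset.mem_filter] at hx ⊢
    exact ⟨hx.1, hx.2.tail h⟩

lemma auxWt_lt_card (I : PrefInstance P) (hI : I.Acyclic) (e : Sym2 P) :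
    auxWt I e < Fintype.card (Sym2 P) := by
  have hnot : ¬ Relation.TransGen (auxELT I) e e := aux_irrefl I hI e
  have hsub : (Finset.univ.filter fun x => Relation.TransGen (auxELT I) x e)
      ⊂ Finset.univ := by
    rw [Finset.ssubset_univ_iff]
    intro hcon
    have hmem : e ∈ Finset.univ.filter fun x => Relation.TransGen (auxELT I) x e := by
      rw [hcon]; exact Finset.mem_univ e
    exact hnot (Finset.mem_filter.mp hmem).2
  have := Finset.card_lt_card hsub
  rwa [Finset.card_univ] at this

/-- The potential of a configuration. -/
noncomputable def auxPot (I : PrefInstance P) (C : Finset (Sym2 P)) : ℕ :=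
  ∑ e ∈ C, 3 ^ (Fintype.card (Sym2 P) - auxWt I e)

lemma aux_mem_mates {C : Finset (Sym2 P)} {x y : P} :
    y ∈ mates C x ↔ s(x, y) ∈ C := by
  simp [mates]

lemma aux_drop_card (I : PrefInstance P) (C : Finset (Sym2 P))
    (hCG : ∀ e ∈ C, e ∈ I.G.edgeSet) (x : P) : (I.dropEdges C x).card ≤ 1 := by
  rw [PrefInstance.dropEdges]
  split
  · simp
  · refine le_trans Finset.card_image_le ?_
    rw [Finset.card_le_one]
    intro w1 hw1 w2 hw2
    rw [Finset.mem_filter] at hw1 hw2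
    have hr : I.rank x w1 = I.rank x w2 :=
      le_antisymm (hw2.2 w1 hw1.1) (hw1.2 w2 hw2.1)
    have a1 : I.G.Adj x w1 := I.G.mem_edgeSet.mp (hCG _ (aux_mem_mates.mp hw1.1))
    have a2 : I.G.Adj x w2 := I.G.mem_edgeSet.mp (hCG _ (aux_mem_mates.mp hw2.1))
    exact I.rank_injOn x a1 a2 hr

lemma aux_drop_spec (I : PrefInstance P) {C : Finset (Sym2 P)}
    (hCG : ∀ e ∈ C, e ∈ I.G.edgeSet) {x y : P}
    (hW : I.Willing C x y) (hAdj : I.G.Adj x y) {e : Sym2 P}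
    (he : e ∈ I.dropEdges C x) : e ∈ C ∧ auxELT I s(x, y) e := by
  rw [PrefInstance.dropEdges] at he
  split at he
  · exact absurd he (Finset.notMem_empty _)
  · rename_i hfull
    rw [Finset.mem_image] at he
    obtain ⟨w, hw, rfl⟩ := he
    rw [Finset.mem_filter] at hw
    have hwC : s(x, w) ∈ C := aux_mem_mates.mp hw.1
    have hAdjw : I.G.Adj x w := I.G.mem_edgeSet.mp (hCG _ hwC)
    rcases hW with hu | ⟨m, hm, hrm⟩
    · exact absurd hu hfull
    · exact ⟨hwC, x, y, w, ⟨hAdj, hAdjw, lt_of_lt_of_le hrm (hw.2 m hm)⟩, rfl, rfl⟩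

lemma aux_pot_step (I : PrefInstance P) (hI : I.Acyclic) {C : Finset (Sym2 P)}
    (hCG : ∀ e ∈ C, e ∈ I.G.edgeSet) {p q : P}
    (hbp : I.BlockingPair C p q) : auxPot I C < auxPot I (I.resolve C p q) := by
  have hpq_notC : s(p, q) ∉ C := hbp.2.1
  have hres : auxPot I (I.resolve C p q)
      = 3 ^ (Fintype.card (Sym2 P) - auxWt I s(p, q))
        + auxPot I (C \ (I.dropEdges C p ∪ I.dropEdges C q)) := by
    simp only [auxPot, PrefInstance.resolve]
    rw [Finset.sum_insert (fun h => hpq_notC (Finset.mem_sdiff.mp h).1)]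
  have hsplitC : auxPot I C
      = auxPot I (C ∩ (I.dropEdges C p ∪ I.dropEdges C q))
        + auxPot I (C \ (I.dropEdges C p ∪ I.dropEdges C q)) := by
    simp only [auxPot]
    rw [Finset.sum_inter_add_sum_sdiff]
  rw [hres, hsplitC]
  have hkey : ∀ e ∈ C ∩ (I.dropEdges C p ∪ I.dropEdges C q),
      auxWt I s(p, q) < auxWt I e := by
    intro e he
    rw [Finset.mem_inter] at he
    rcases Finset.mem_union.mp he.2 with h | h
    · exact auxWt_lt I hI (aux_drop_spec I hCG hbp.2.2.1 hbp.1 h).2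
    · have := auxWt_lt I hI (aux_drop_spec I hCG hbp.2.2.2 hbp.1.symm h).2
      rwa [Sym2.eq_swap] at this
  have hcard : (C ∩ (I.dropEdges C p ∪ I.dropEdges C q)).card ≤ 2 := by
    have hc1 := aux_drop_card I C hCG p
    have hc2 := aux_drop_card I C hCG q
    have h3' := Finset.card_union_le (I.dropEdges C p) (I.dropEdges C q)
    have h4 : (C ∩ (I.dropEdges C p ∪ I.dropEdges C q)).card
        ≤ (I.dropEdges C p ∪ I.dropEdges C q).card :=
      Finset.card_le_card Finset.inter_subset_right
    omega
  have hw0N : auxWt I s(p, q) < Fintype.card (Sym2 P) := auxWt_lt_card I hI _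
  have hbound : auxPot I (C ∩ (I.dropEdges C p ∪ I.dropEdges C q))
      ≤ 2 * 3 ^ (Fintype.card (Sym2 P) - auxWt I s(p, q) - 1) := by
    calc auxPot I (C ∩ (I.dropEdges C p ∪ I.dropEdges C q))
        ≤ (C ∩ (I.dropEdges C p ∪ I.dropEdges C q)).card
          * 3 ^ (Fintype.card (Sym2 P) - auxWt I s(p, q) - 1) := by
          rw [auxPot]
          have := Finset.sum_le_card_nsmul
            (C ∩ (I.dropEdges C p ∪ I.dropEdges C q))
            (fun e => 3 ^ (Fintype.card (Sym2 P) - auxWt I e))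
            (3 ^ (Fintype.card (Sym2 P) - auxWt I s(p, q) - 1))
            (fun e he => Nat.pow_le_pow_right (by norm_num) (by have := hkey e he; omega))
          simpa [smul_eq_mul] using this
      _ ≤ 2 * 3 ^ (Fintype.card (Sym2 P) - auxWt I s(p, q) - 1) :=
          Nat.mul_le_mul_right _ hcard
  have hfin : 2 * 3 ^ (Fintype.card (Sym2 P) - auxWt I s(p, q) - 1)
      < 3 ^ (Fintype.card (Sym2 P) - auxWt I s(p, q)) := by
    obtain ⟨t, ht⟩ : ∃ t, Fintype.card (Sym2 P) - auxWt I s(p, q) = t + 1 :=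
      ⟨Fintype.card (Sym2 P) - auxWt I s(p, q) - 1, by omega⟩
    rw [ht, Nat.add_sub_cancel, pow_succ]
    have hpos : 0 < 3 ^ t := pow_pos (by norm_num) t
    omega
  omega

/-- In an acyclic instance, a sequence of active initiatives
never visits the same configuration twice. -/
theorem acyclic_activeSteps_injective (I : PrefInstance P) (hI : I.Acyclic)
    (k : ℕ) (f : ℕ → Finset (Sym2 P)) (hC : I.IsConfig (f 0))
    (hstep : ∀ i < k, I.ActiveStep (f i) (f (i + 1))) :
    ∀ i ≤ k, ∀ j ≤ k, f i = f j → i = j := by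
  -- all configurations in the sequence consist of acceptance-graph edges
  have hG : ∀ i ≤ k, ∀ e ∈ f i, e ∈ I.G.edgeSet := by
    intro i
    induction i with
    | zero => exact fun _ => hC.1
    | succ m ih =>
        intro hm e he
        obtain ⟨p, q, hbp, hres⟩ := hstep m (by omega)
        rw [hres, PrefInstance.resolve] at he
        rcases Finset.mem_insert.mp he with h | h
        · rw [h]
          exact hbp.1
        · exact ih (by omega) e (Finset.mem_sdiff.mp h).1
  -- the potential strictly increases along the sequence
  have hstep' : ∀ m < k, auxPot I (f m) < auxPot I (f (m + 1)) := by
    intro m hm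
    obtain ⟨p, q, hbp, hres⟩ := hstep m hm
    rw [hres]
    exact aux_pot_step I hI (hG m (le_of_lt hm)) hbp
  have hmono : ∀ j ≤ k, ∀ i < j, auxPot I (f i) < auxPot I (f j) := by
    intro j
    induction j with
    | zero => omega
    | succ m ih =>
        intro hm i hi
        have hs := hstep' m (by omega)
        rcases Nat.lt_succ_iff_lt_or_eq.mp hi with h | h
        · exact (ih (by omega) i h).trans hs
        · rw [h]
          exact hs
  intro i hi j hj hij
  rcases lt_trichotomy i j with h | h | h
  · have := hmono j hj i h
    rw [hij] at this
    exact absurd this (lt_irrefl _)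
  · exact h
  · have := hmono i hi j h
    rw [hij] at this
    exact absurd this (lt_irrefl _)
end

section
/- Loving pairs are unbreakable: if {p,q} is a loving pair of a b-matching preference instance and C is a configuration containing the edge {p,q}, then every configuration obtained from C by a finite sequence of active initiatives still contains the edge {p,q}. -/
/-!
A formalization of b-matching preference instances (peers, acceptance graph,
quotas, preference lists given by ranks), configurations, blocking pairs,
stability, active initiatives, loving pairs, and acyclicity.
-/

open Finset

variable {P : Type*} [Fintype P] [DecidableEq P]

open PrefInstance


lemma loving_not_drop (I : PrefInstance P) (p q x y : P) (hpq : I.LovingPair p q)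
    (C : Finset (Sym2 P)) (hadj : I.G.Adj x y) (hw : I.Willing C x y) :
    s(p, q) ∉ I.dropEdges C x := by
  intro hmem
  unfold PrefInstance.dropEdges at hmem
  by_cases h : (PrefInstance.mates C x).card < I.b x
  · simp [h] at hmem
  · rw [if_neg h] at hmem
    obtain ⟨w, hwf, heq⟩ := Finset.mem_image.mp hmem
    obtain ⟨hwm, hworst⟩ := Finset.mem_filter.mp hwf
    rcases hw with hum | ⟨m, hm, hrank⟩
    · exact h hum
    · rcases Sym2.eq_iff.mp heq with ⟨hx, hwq⟩ | ⟨hx, hwq⟩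
      · rw [hx] at hworst hadj hrank hm; rw [hwq] at hworst
        have h1 : I.rank p m ≤ I.rank p q := hworst m hm
        have h2 : I.rank p q ≤ I.rank p y := hpq.2.1 y hadj
        omega
      · rw [hx] at hworst hadj hrank hm; rw [hwq] at hworst
        have h1 : I.rank q m ≤ I.rank q p := hworst m hm
        have h2 : I.rank q p ≤ I.rank q y := hpq.2.2 y hadj
        omega

lemma loving_step (I : PrefInstance P) (p q : P) (hpq : I.LovingPair p q)
    {C C' : Finset (Sym2 P)} (hstep : I.ActiveStep C C') (hin : s(p, q) ∈ C) :
    s(p, q) ∈ C' := by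
  obtain ⟨a, b, hbp, rfl⟩ := hstep
  unfold PrefInstance.resolve
  apply Finset.mem_insert_of_mem
  rw [Finset.mem_sdiff]
  refine ⟨hin, ?_⟩
  rw [Finset.mem_union]
  rintro (hd | hd)
  · exact loving_not_drop I p q a b hpq C hbp.1 hbp.2.2.1 hd
  · exact loving_not_drop I p q b a hpq C hbp.1.symm hbp.2.2.2 hd

/-- Loving pairs are unbreakable: once matched, no finite
sequence of active initiatives can unmatch them. -/
theorem lovingPair_unbreakable (I : PrefInstance P) (p q : P)
    (hpq : I.LovingPair p q) (k : ℕ) (f : ℕ → Finset (Sym2 P))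
    (hC : I.IsConfig (f 0)) (hin : s(p, q) ∈ f 0)
    (hstep : ∀ i < k, I.ActiveStep (f i) (f (i + 1))) :
    s(p, q) ∈ f k := by
  induction k with
  | zero => exact hin
  | succ n ih =>
    exact loving_step I p q hpq (hstep n (Nat.lt_succ_self n))
      (ih fun i hi => hstep i (Nat.lt_succ_of_lt hi))
end
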